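/- Let B be a nonempty set and f, g : B → ω be (total) functions. For n ∈ ω define the partial functions 𝒰(n) = max{f(b) : b ∈ B, g(b) ≤ n} (defined when this set is nonempty and bounded) and ℒ(n) = min{g(b) : b ∈ B, f(b) ≥ n} (defined when this set is nonempty). Then typ(ℒ) = ρ(typ(𝒰)), where ρ(α) = ε, ρ(β) = δ, ρ(γ) = γ, ρ(δ) = β, ρ(ε) = α. -/

import Mathlib

/-!
Write `u = 𝒰` (`valU`) and `l = ℒ` (`valL`). Since `u m` is attained by some `b` with `g b ≤ m`
and bounds every such `f b`, and dually for `l n`, the two partial functions form a Galois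
connection on their domains: `l n ≤ m ↔ n ≤ u m`. Taking `m = n` turns `Dom⁻(l)` into `Dom⁺(u)`,
and taking `n = m + 1` turns `Dom⁺(l)` into `Dom⁻(u) + 1`; boundedness of one function on an
infinite domain forces the other domain to be finite. Add two facts about the domains: `Dom(u)` is
either finite or cofinite, and `Dom(l)` is all of `ℕ` as soon as `f` is unbounded. Each of the five
types then goes over to its image under `ρ`.
-/

def domPlus (D : Set ℕ) (g : ℕ → ℕ) : Set ℕ := {n ∈ D | n ≤ g n}

def domMinus (D : Set ℕ) (g : ℕ → ℕ) : Set ℕ := {n ∈ D | g n ≤ n}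

def bddOn (D : Set ℕ) (g : ℕ → ℕ) : Prop := ∃ C, ∀ n ∈ D, g n ≤ C

inductive Typ where
  | A | B | C | D | E
deriving DecidableEq

/-- The five defining conditions of types α, β, γ, δ, ε, for a partial function
represented by its domain `D` and value function `g`. -/
def typIs (D : Set ℕ) (g : ℕ → ℕ) : Typ → Prop
  | .A => D.Infinite ∧ bddOn D g
  | .B => D.Infinite ∧ (domPlus D g).Finite ∧ ¬ bddOn D g
  | .C => (domPlus D g).Infinite ∧ (domMinus D g).Infinite
  | .D => D.Infinite ∧ (domMinus D g).Finite
  | .E => D.Finite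

/-- ρ(α) = ε, ρ(β) = δ, ρ(γ) = γ, ρ(δ) = β, ρ(ε) = α. -/
def rho : Typ → Typ
  | .A => .E
  | .B => .D
  | .C => .C
  | .D => .B
  | .E => .A

open Set

def GaloisConnectionOn (l u : ℕ → ℕ) (Dl Du : Set ℕ) : Prop :=
  ∀ n ∈ Dl, ∀ m ∈ Du, l n ≤ m ↔ n ≤ u m

namespace GaloisConnectionOn

variable {l u : ℕ → ℕ} {Dl Du : Set ℕ}

theorem mem_domMinus_iff (h : GaloisConnectionOn l u Dl Du) {n : ℕ} (hl : n ∈ Dl) (hu : n ∈ Du) :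
    n ∈ domMinus Dl l ↔ n ∈ domPlus Du u := by
  simp only [domMinus, domPlus, mem_ofPred_eq, h n hl n hu, hl, hu, true_and]

theorem succ_mem_domPlus_iff (h : GaloisConnectionOn l u Dl Du) {m : ℕ} (hl : m + 1 ∈ Dl)
    (hu : m ∈ Du) : m + 1 ∈ domPlus Dl l ↔ m ∈ domMinus Du u := by
  have := h (m + 1) hl m hu
  simp only [domMinus, domPlus, mem_ofPred_eq, hl, hu, true_and]
  omega

theorem finite_left_of_bddOn_right (h : GaloisConnectionOn l u Dl Du) (hbdd : bddOn Du u)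
    (hinf : Du.Infinite) : Dl.Finite := by
  obtain ⟨C, hC⟩ := hbdd
  refine (finite_Iic C).subset fun n hn => ?_
  by_contra hnC
  refine hinf ((finite_Iio (l n)).subset fun m hm => ?_)
  exact lt_of_not_ge fun hle => hnC (((h n hn m hm).mp hle).trans (hC m hm))

theorem finite_right_of_bddOn_left (h : GaloisConnectionOn l u Dl Du) (hbdd : bddOn Dl l)
    (hinf : Dl.Infinite) : Du.Finite := by
  obtain ⟨C, hC⟩ := hbdd
  refine (finite_Iio C).subset fun m hm => ?_
  by_contra hCm
  refine hinf ((finite_Iic (u m)).subset fun n hn => ?_)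
  exact (h n hn m hm).mp ((hC n hn).trans (not_lt.mp hCm))

end GaloisConnectionOn

theorem not_bddOn_of_domPlus_infinite {D : Set ℕ} {v : ℕ → ℕ} (h : (domPlus D v).Infinite) :
    ¬ bddOn D v := by
  rintro ⟨C, hC⟩
  exact h ((finite_Iic C).subset fun n hn => hn.2.trans (hC n hn.1))

section MaxMin

variable {B : Type*} {f g : B → ℕ} {valU valL : ℕ → ℕ}

def upperDom (f g : B → ℕ) : Set ℕ :=
  {m | (∃ b, g b ≤ m) ∧ BddAbove (f '' {b | g b ≤ m})}

def lowerDom (f : B → ℕ) : Set ℕ :=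
  {n | ∃ b, n ≤ f b}

theorem galoisConnectionOn_of_isLeast_of_isGreatest {domL domU : Set ℕ}
    (hL : ∀ n ∈ domL, IsLeast (g '' {b | n ≤ f b}) (valL n))
    (hU : ∀ m ∈ domU, IsGreatest (f '' {b | g b ≤ m}) (valU m)) :
    GaloisConnectionOn valL valU domL domU := by
  intro n hn m hm
  obtain ⟨⟨b, hnb, hgb⟩, hlb⟩ := hL n hn
  obtain ⟨⟨b', hb'm, hfb'⟩, hub⟩ := hU m hm
  constructor
  · intro hle
    exact hnb.trans (hub ⟨b, (hgb.trans_le hle : g b ≤ m), rfl⟩)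
  · intro hle
    exact (hlb ⟨b', (hle.trans hfb'.ge : n ≤ f b'), rfl⟩).trans hb'm

theorem bddAbove_image_of_upperDom_infinite (hinf : (upperDom f g).Infinite) (m : ℕ) :
    BddAbove (f '' {b | g b ≤ m}) := by
  obtain ⟨m', ⟨-, hbdd⟩, hmm'⟩ := hinf.exists_gt m
  exact hbdd.mono (image_mono fun b hb => le_trans hb hmm'.le)

theorem upperDom_compl_finite (hinf : (upperDom f g).Infinite) : (upperDom f g)ᶜ.Finite := by
  obtain ⟨m, ⟨b, -⟩, -⟩ := hinf.nonempty
  refine (finite_Iio (g b)).subset fun m' hm' => ?_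
  by_contra hle
  exact hm' ⟨⟨b, not_lt.mp hle⟩, bddAbove_image_of_upperDom_infinite hinf m'⟩

theorem exists_not_bddAbove_image_of_upperDom_finite [Nonempty B]
    (hfin : (upperDom f g).Finite) : ∃ m, ¬ BddAbove (f '' {b | g b ≤ m}) := by
  by_contra! hbdd
  obtain ⟨b⟩ := ‹Nonempty B›
  exact (Ici_infinite (g b)).mono (fun m (hm : g b ≤ m) => (⟨⟨b, hm⟩, hbdd m⟩ : m ∈ upperDom f g))
    hfin

theorem lowerDom_eq_univ_of_not_bddOn {D : Set ℕ}
    (hU : ∀ m ∈ D, IsGreatest (f '' {b | g b ≤ m}) (valU m)) (h : ¬ bddOn D valU) :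
    lowerDom f = univ := by
  refine eq_univ_of_forall fun n => ?_
  obtain ⟨m, hm, hnm⟩ : ∃ m ∈ D, n < valU m := by
    by_contra! hle
    exact h ⟨n, hle⟩
  obtain ⟨b, -, hfb⟩ := (hU m hm).1
  exact ⟨b, hfb ▸ hnm.le⟩

theorem typIs_A_of_E [Nonempty B]
    (hL : ∀ n ∈ lowerDom f, IsLeast (g '' {b | n ≤ f b}) (valL n))
    (h : typIs (upperDom f g) valU .E) : typIs (lowerDom f) valL .A := by
  obtain ⟨m, hm⟩ := exists_not_bddAbove_image_of_upperDom_finite h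
  have hunb : ∀ n, ∃ b, g b ≤ m ∧ n ≤ f b := fun n => by
    obtain ⟨_, ⟨b, hb, rfl⟩, hn⟩ := not_bddAbove_iff.mp hm n
    exact ⟨b, hb, hn.le⟩
  have hdomL : lowerDom f = univ := eq_univ_of_forall fun n => (hunb n).imp fun _ => And.right
  refine ⟨hdomL ▸ infinite_univ, m, fun n hn => ?_⟩
  obtain ⟨b, hbm, hnb⟩ := hunb n
  exact ((hL n hn).2 ⟨b, hnb, rfl⟩).trans hbm

theorem typIs_D_of_B (hU : ∀ m ∈ upperDom f g, IsGreatest (f '' {b | g b ≤ m}) (valU m))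
    (hgc : GaloisConnectionOn valL valU (lowerDom f) (upperDom f g))
    (h : typIs (upperDom f g) valU .B) : typIs (lowerDom f) valL .D := by
  obtain ⟨hinf, hplus, hunb⟩ := h
  refine ⟨lowerDom_eq_univ_of_not_bddOn hU hunb ▸ infinite_univ,
    (hplus.union (upperDom_compl_finite hinf)).subset fun n hn => ?_⟩
  by_cases hnU : n ∈ upperDom f g
  · exact Or.inl ((hgc.mem_domMinus_iff hn.1 hnU).mp hn)
  · exact Or.inr hnU

theorem typIs_C_of_C (hU : ∀ m ∈ upperDom f g, IsGreatest (f '' {b | g b ≤ m}) (valU m))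
    (hgc : GaloisConnectionOn valL valU (lowerDom f) (upperDom f g))
    (h : typIs (upperDom f g) valU .C) : typIs (lowerDom f) valL .C := by
  obtain ⟨hplus, hminus⟩ := h
  have hdomL := lowerDom_eq_univ_of_not_bddOn hU (not_bddOn_of_domPlus_infinite hplus)
  constructor
  · refine (hminus.image (add_left_injective 1).injOn).mono ?_
    rintro _ ⟨m, hm, rfl⟩
    exact (hgc.succ_mem_domPlus_iff (hdomL ▸ mem_univ _) hm.1).mpr hm
  · exact hplus.mono fun n hn => (hgc.mem_domMinus_iff (hdomL ▸ mem_univ _) hn.1).mpr hn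

theorem typIs_B_of_D (hU : ∀ m ∈ upperDom f g, IsGreatest (f '' {b | g b ≤ m}) (valU m))
    (hgc : GaloisConnectionOn valL valU (lowerDom f) (upperDom f g))
    (h : typIs (upperDom f g) valU .D) : typIs (lowerDom f) valL .B := by
  obtain ⟨hinf, hminus⟩ := h
  have hplus : (domPlus (upperDom f g) valU).Infinite := fun hfin =>
    hinf ((hfin.union hminus).subset fun n hn => (le_total n (valU n)).imp (⟨hn, ·⟩) (⟨hn, ·⟩))
  have hLinf : (lowerDom f).Infinite :=
    lowerDom_eq_univ_of_not_bddOn hU (not_bddOn_of_domPlus_infinite hplus) ▸ infinite_univ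
  refine ⟨hLinf, ?_, fun hbdd => hinf (hgc.finite_right_of_bddOn_left hbdd hLinf)⟩
  refine (((hminus.union (upperDom_compl_finite hinf)).image (· + 1)).insert 0).subset ?_
  rintro (_ | m) hm
  · exact mem_insert 0 _
  · refine mem_insert_of_mem 0 ⟨m, ?_, rfl⟩
    by_cases hmU : m ∈ upperDom f g
    · exact Or.inl ((hgc.succ_mem_domPlus_iff hm.1 hmU).mp hm)
    · exact Or.inr hmU

end MaxMin

/-- Proposition 5 of Moshkov 1996: `typ(ℒ) = ρ(typ(𝒰))`, where
`𝒰(n) = max {f b : g b ≤ n}` (defined when this set is nonempty and bounded)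
and `ℒ(n) = min {g b : f b ≥ n}` (defined when this set is nonempty). -/
theorem stmt3 {B : Type*} [Nonempty B] (f g : B → ℕ)
    (domU : Set ℕ) (valU : ℕ → ℕ) (domL : Set ℕ) (valL : ℕ → ℕ)
    (hdomU : domU = {m | (∃ b, g b ≤ m) ∧ BddAbove {k | ∃ b, g b ≤ m ∧ f b = k}})
    (hvalU : ∀ m ∈ domU, valU m = sSup {k | ∃ b, g b ≤ m ∧ f b = k})
    (hdomL : domL = {m | ∃ b, m ≤ f b})
    (hvalL : ∀ m ∈ domL, valL m = sInf {k | ∃ b, m ≤ f b ∧ g b = k})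
    (t : Typ) (ht : typIs domU valU t) :
    typIs domL valL (rho t) := by
  change domU = upperDom f g at hdomU
  change domL = lowerDom f at hdomL
  subst hdomU hdomL
  have hU : ∀ m ∈ upperDom f g, IsGreatest (f '' {b | g b ≤ m}) (valU m) := fun m hm => by
    rw [hvalU m hm]
    obtain ⟨⟨b, hb⟩, hbdd⟩ := hm
    exact ⟨Nat.sSup_mem ⟨f b, b, hb, rfl⟩ hbdd, fun _ hk => le_csSup hbdd hk⟩
  have hL : ∀ n ∈ lowerDom f, IsLeast (g '' {b | n ≤ f b}) (valL n) := fun n hn => by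
    rw [hvalL n hn]
    obtain ⟨b, hb⟩ := hn
    exact isLeast_csInf ⟨g b, b, hb, rfl⟩
  have hgc := galoisConnectionOn_of_isLeast_of_isGreatest hL hU
  cases t with
  | A => exact hgc.finite_left_of_bddOn_right ht.2 ht.1
  | B => exact typIs_D_of_B hU hgc ht
  | C => exact typIs_C_of_C hU hgc ht
  | D => exact typIs_B_of_D hU hgc ht
  | E => exact typIs_A_of_E hL ht
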